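/- In the tree setting described in the context, suppose additionally that A* := limsup_{n→∞} (1/n)∑_{i=1}^{n} aᵢ is finite and set G_* := liminf_{n→∞} (∏_{i=1}^{n} aᵢ)^{1/n}, and let 𝒞 = ⋂_{n≥0} ⋃_{θ of length n} J_θ. Then there exists a Borel probability measure μ supported on 𝒞 such that μ(𝒞 ∩ J_θ) = 1/(κ₁κ₂⋯κₙ) for every word θ of length n, and this measure satisfies, for every x ∈ 𝒞, liminf_{r→0⁺} log μ(B(x,r))/log r ≥ (log(b₁/2) + log G_*)/(d₂ · A*), where B(x,r) denotes the open ball of radius r centered at x. -/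

import Mathlib

noncomputable section

namespace CantorTree

/-- `κ n = ⌊b₁ · a n⌋`. -/
def kappa (b₁ : ℝ) (a : ℕ → ℝ) (n : ℕ) : ℕ := ⌊b₁ * a n⌋₊

/-- A word `θ = ω₁⋯ωₙ` (represented with 0-based indices) is valid when its
`i`-th letter lies in `{1, …, κ_{i+1}}`. -/
def ValidWord (b₁ : ℝ) (a : ℕ → ℝ) (n : ℕ) (θ : Fin n → ℕ) : Prop :=
  ∀ i : Fin n, 1 ≤ θ i ∧ θ i ≤ kappa b₁ a ((i : ℕ) + 1)

/-- The tree setting: a family of nonempty compact intervals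
`J_θ = [L n θ, R n θ]` of positive length indexed by valid words,
satisfying the nesting, gap and length-ratio conditions. -/
structure TreeFamily (b₁ c₁ d₁ d₂ : ℝ) (a : ℕ → ℝ)
    (L R : ∀ n : ℕ, (Fin n → ℕ) → ℝ) : Prop where
  b₁_pos : 0 < b₁
  c₁_pos : 0 < c₁
  d₁_pos : 0 < d₁
  d₁_le_d₂ : d₁ ≤ d₂
  a_lower : ∀ n : ℕ, 1 ≤ n → 2 / b₁ ≤ a n
  a_exp : ∀ n : ℕ, 1 ≤ n → 2 * a n ≤ c₁ * Real.exp (d₁ * a n)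
  len_pos : ∀ n θ, ValidWord b₁ a n θ → L n θ < R n θ
  nested : ∀ n θ, ValidWord b₁ a n θ → ∀ i : ℕ, 1 ≤ i → i ≤ kappa b₁ a (n + 1) →
    L n θ ≤ L (n + 1) (Fin.snoc θ i) ∧ R (n + 1) (Fin.snoc θ i) ≤ R n θ
  gap : ∀ n θ, ValidWord b₁ a n θ → ∀ i : ℕ, 1 ≤ i → i + 1 ≤ kappa b₁ a (n + 1) →
    R (n + 1) (Fin.snoc θ i) < L (n + 1) (Fin.snoc θ (i + 1)) ∧
    c₁ * (R n θ - L n θ) / a (n + 1) ≤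
      L (n + 1) (Fin.snoc θ (i + 1)) - R (n + 1) (Fin.snoc θ i)
  ratio : ∀ n θ, ValidWord b₁ a n θ → ∀ i : ℕ, 1 ≤ i → i ≤ kappa b₁ a (n + 1) →
    Real.exp (-d₂ * a (n + 1)) * (R n θ - L n θ) ≤
      R (n + 1) (Fin.snoc θ i) - L (n + 1) (Fin.snoc θ i) ∧
    R (n + 1) (Fin.snoc θ i) - L (n + 1) (Fin.snoc θ i) ≤
      Real.exp (-d₁ * a (n + 1)) * (R n θ - L n θ)

/-- The Cantor set `𝒞 = ⋂ₙ ⋃_{θ of length n} J_θ`. -/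
def cantorSet (b₁ : ℝ) (a : ℕ → ℝ) (L R : ∀ n : ℕ, (Fin n → ℕ) → ℝ) : Set ℝ :=
  ⋂ n : ℕ, ⋃ θ : Fin n → ℕ, ⋃ _ : ValidWord b₁ a n θ, Set.Icc (L n θ) (R n θ)

end CantorTree

open CantorTree
open scoped ENNReal

/-!
Code the branches of the tree by sequences `ω` with `ω n < κₙ₊₁` and push the uniform product
measure forward along `ω ↦ ⋂ₙ J_{ω₁⋯ωₙ}`. Distinct intervals of one level are disjoint, so this
measure gives mass `1/(κ₁⋯κₙ)` to `J_θ`.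

For `x ∈ 𝒞` let `ℓₙ` be the length of the level-`n` interval containing `x`. The gap condition and
`2aₙ ≤ c₁ e^{d₁aₙ}` put every point of `𝒞` outside that interval at distance at least `2ℓₙ` from
`x`. Hence for `2ℓₙ₊₁ < r ≤ 2ℓₙ` the ball `B(x, r)` has mass at most
`1/(κ₁⋯κₙ) ≤ ∏ᵢ≤ₙ 2/(b₁aᵢ)`, while `r > 2ℓ₀ e^{-d₂(a₁+⋯+aₙ₊₁)}`. The logarithms of these two bounds
grow like `n (log(b₁/2) + log G_*)` and `n d₂A*`.
-/

open Set Filter MeasureTheory ProbabilityTheory Topology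

section UniformCode

variable (k : ℕ → ℕ)

def uniformCodeMeasure : Measure (∀ n, Fin (k n)) :=
  Measure.infinitePi fun n => uniformOn (univ : Set (Fin (k n)))

variable {k}

theorem isProbabilityMeasure_uniformCodeMeasure (hk : ∀ n, 0 < k n) :
    IsProbabilityMeasure (uniformCodeMeasure k) := by
  have : ∀ n, Nonempty (Fin (k n)) := fun n => ⟨⟨0, hk n⟩⟩
  unfold uniformCodeMeasure
  infer_instance

theorem uniformCodeMeasure_prefix (hk : ∀ n, 0 < k n) (n : ℕ) (c : ∀ i : Fin n, Fin (k i)) :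
    uniformCodeMeasure k {ω | ∀ i : Fin n, ω i = c i} = ∏ i ∈ Finset.range n, (k i : ℝ≥0∞)⁻¹ := by
  have : ∀ n, Nonempty (Fin (k n)) := fun n => ⟨⟨0, hk n⟩⟩
  have hpi : {ω : ∀ n, Fin (k n) | ∀ i : Fin n, ω i = c i} =
      (Finset.range n : Set ℕ).pi fun i => {x | ∀ h : i < n, x = c ⟨i, h⟩} := by
    ext ω
    simp [Fin.forall_iff]
  rw [uniformCodeMeasure, hpi, Measure.infinitePi_pi _ fun _ _ => .of_discrete]
  refine Finset.prod_congr rfl fun i hi => ?_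
  have hsingle : {x | ∀ h : i < n, x = c ⟨i, h⟩} = {c ⟨i, Finset.mem_range.1 hi⟩} := by
    ext x
    simp [Finset.mem_range.1 hi]
  rw [hsingle, uniformOn_univ, Measure.count_singleton, Fintype.card_fin, one_div]

end UniformCode

theorem exists_gt_and_mul_lt {c A V : ℝ} (hc : 0 < c) (h : c * A < V) :
    ∃ A' > A, c * A' < V := by
  obtain ⟨W, hW, hWV⟩ := exists_between h
  exact ⟨W / c, by rwa [gt_iff_lt, lt_div_iff₀' hc], by rwa [mul_div_cancel₀ _ hc.ne']⟩

theorem eventually_mul_le_of_linear_growth {u v : ℕ → ℝ} {U V d : ℝ} (hd : 0 < d)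
    (hdVU : d * V < U) (hu : ∀ U' < U, ∀ᶠ n in atTop, U' * n ≤ u n)
    (hv : ∀ V' > V, ∀ᶠ n in atTop, v n ≤ V' * n) :
    ∀ᶠ n in atTop, d * v n ≤ u n := by
  obtain ⟨V', hVV', hV'U⟩ := exists_gt_and_mul_lt hd hdVU
  filter_upwards [hu _ hV'U, hv V' hVV'] with n hun hvn
  calc d * v n ≤ d * (V' * n) := by gcongr
    _ = d * V' * n := by ring
    _ ≤ u n := hun

theorem eventually_mul_shift_add_le_of_linear_growth {w : ℕ → ℝ} {A c C : ℝ} (hc : 0 < c)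
    (hw : ∀ A' > A, ∀ᶠ n in atTop, w n ≤ A' * n) :
    ∀ V > c * A, ∀ᶠ n in atTop, c * w (n + 1) + C ≤ V * n := by
  intro V hV
  obtain ⟨A', hAA', hA'V⟩ := exists_gt_and_mul_lt hc hV
  filter_upwards [(tendsto_add_atTop_nat 1).eventually (hw A' hAA'),
    tendsto_natCast_atTop_atTop.eventually_ge_atTop ((c * A' + C) / (V - c * A'))] with n hwn hn
  rw [div_le_iff₀ (sub_pos.2 hA'V)] at hn
  push_cast at hwn
  nlinarith

theorem eventually_le_mul_of_limsup_div_lt {w : ℕ → ℝ}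
    (hbdd : IsBoundedUnder (· ≤ ·) atTop fun n : ℕ => w n / n) :
    ∀ A' > limsup (fun n : ℕ => w n / n) atTop, ∀ᶠ n in atTop, w n ≤ A' * n := by
  intro A' hA'
  filter_upwards [eventually_lt_of_limsup_lt hA' hbdd, eventually_gt_atTop 0] with n h hn
  rw [div_lt_iff₀ (by exact_mod_cast hn)] at h
  exact h.le

theorem eventually_lt_log_of_lt_log_liminf {u : ℕ → ℝ} {m c : ℝ} (hm : 0 < m)
    (hlow : ∀ᶠ n in atTop, m ≤ u n) (hup : IsBoundedUnder (· ≤ ·) atTop u)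
    (hc : c < Real.log (liminf u atTop)) : ∀ᶠ n in atTop, c < Real.log (u n) := by
  have hlim : m ≤ liminf u atTop := le_liminf_of_le hup.isCoboundedUnder_ge hlow
  rw [Real.lt_log_iff_exp_lt (hm.trans_le hlim)] at hc
  filter_upwards [eventually_lt_of_lt_liminf hc ⟨m, eventually_map.2 hlow⟩, hlow] with n h hn
  exact (Real.lt_log_iff_exp_lt (hm.trans_le hn)).2 h

theorem Antitone.exists_apply_succ_lt_le {ℓ : ℕ → ℝ} (hℓ : Antitone ℓ)
    (h0 : Tendsto ℓ atTop (𝓝 0)) {N : ℕ} {r : ℝ} (hr0 : 0 < r) (hr : r ≤ ℓ N) :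
    ∃ n ≥ N, ℓ (n + 1) < r ∧ r ≤ ℓ n := by
  classical
  have hex : ∃ m, ℓ m < r := (h0.eventually (gt_mem_nhds hr0)).exists
  have hN : N < Nat.find hex := by
    by_contra! h
    exact (Nat.find_spec hex).not_ge (hr.trans (hℓ h))
  obtain ⟨n, hn⟩ : ∃ n, Nat.find hex = n + 1 := Nat.exists_eq_add_one_of_ne_zero (by omega)
  exact ⟨n, by omega, hn ▸ Nat.find_spec hex, not_lt.1 (Nat.find_min hex (by omega))⟩

theorem eventually_log_measure_div_log_nonneg {α : Type*} [MeasurableSpace α] (μ : Measure α)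
    [IsProbabilityMeasure μ] (s : ℝ → Set α) :
    ∀ᶠ r in 𝓝[>] (0 : ℝ), 0 ≤ Real.log (μ (s r)).toReal / Real.log r := by
  filter_upwards [Ioo_mem_nhdsGT one_pos] with r hr
  exact div_nonneg_of_nonpos (Real.log_nonpos ENNReal.toReal_nonneg measureReal_le_one)
    (Real.log_neg hr.1 hr.2).le

namespace CantorTree

variable {b₁ c₁ d₁ d₂ : ℝ} {a : ℕ → ℝ} {L R : ∀ n : ℕ, (Fin n → ℕ) → ℝ} {x : ℝ}

theorem ValidWord.init {n : ℕ} {ψ : Fin (n + 1) → ℕ} (hψ : ValidWord b₁ a (n + 1) ψ) :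
    ValidWord b₁ a n (Fin.init ψ) :=
  fun i => hψ i.castSucc

theorem ValidWord.snoc {n : ℕ} {θ : Fin n → ℕ} (hθ : ValidWord b₁ a n θ) {i : ℕ}
    (hi : 1 ≤ i ∧ i ≤ kappa b₁ a (n + 1)) : ValidWord b₁ a (n + 1) (Fin.snoc θ i) :=
  Fin.lastCases (by simpa using hi) (fun j => by simpa using hθ j)

/-- A branch of the tree, coded by 0-based letters: `ω n + 1` is the letter at position `n`. -/
abbrev Code (b₁ : ℝ) (a : ℕ → ℝ) : Type := ∀ n : ℕ, Fin (kappa b₁ a (n + 1))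

namespace Code

def word (ω : Code b₁ a) (n : ℕ) : Fin n → ℕ := fun i => ω i + 1

theorem validWord_word (ω : Code b₁ a) (n : ℕ) : ValidWord b₁ a n (ω.word n) :=
  fun i => ⟨Nat.le_add_left 1 _, (ω i).isLt⟩

theorem word_eq_iff {ω : Code b₁ a} {n : ℕ} {θ : Fin n → ℕ} (hθ : ValidWord b₁ a n θ) :
    ω.word n = θ ↔ ∀ i : Fin n, ω i = ⟨θ i - 1, by have := hθ i; omega⟩ := by
  simp only [word, funext_iff, Fin.ext_iff]
  exact forall_congr' fun i => by have := hθ i; omega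

theorem measurable_word (n : ℕ) : Measurable fun ω : Code b₁ a => ω.word n :=
  measurable_pi_lambda _ fun _ =>
    (measurable_of_finite fun c : Fin _ => (c : ℕ) + 1).comp (measurable_pi_apply _)

end Code

def codePoint (b₁ : ℝ) (a : ℕ → ℝ) (L : ∀ n : ℕ, (Fin n → ℕ) → ℝ) (ω : Code b₁ a) : ℝ :=
  ⨆ n, L n (ω.word n)

theorem measurable_codePoint : Measurable (codePoint b₁ a L) :=
  Measurable.iSup fun n => (measurable_of_countable (L n)).comp (Code.measurable_word n)

def cantorMeasure (b₁ : ℝ) (a : ℕ → ℝ) (L : ∀ n : ℕ, (Fin n → ℕ) → ℝ) : Measure ℝ :=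
  (uniformCodeMeasure fun n => kappa b₁ a (n + 1)).map (codePoint b₁ a L)

def branchWord (b₁ : ℝ) (a : ℕ → ℝ) (L R : ∀ n : ℕ, (Fin n → ℕ) → ℝ) (x : ℝ) (n : ℕ) :
    Fin n → ℕ :=
  Classical.epsilon fun θ => ValidWord b₁ a n θ ∧ x ∈ Icc (L n θ) (R n θ)

def branchLength (b₁ : ℝ) (a : ℕ → ℝ) (L R : ∀ n : ℕ, (Fin n → ℕ) → ℝ) (x : ℝ) (n : ℕ) : ℝ :=
  R n (branchWord b₁ a L R x n) - L n (branchWord b₁ a L R x n)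

theorem branchWord_spec (hx : x ∈ cantorSet b₁ a L R) (n : ℕ) :
    ValidWord b₁ a n (branchWord b₁ a L R x n) ∧
      x ∈ Icc (L n (branchWord b₁ a L R x n)) (R n (branchWord b₁ a L R x n)) := by
  obtain ⟨θ, hθ, hxθ⟩ := mem_iUnion₂.1 (mem_iInter.1 hx n)
  exact Classical.epsilon_spec (p := fun θ => ValidWord b₁ a n θ ∧ x ∈ Icc (L n θ) (R n θ))
    ⟨θ, hθ, hxθ⟩

theorem Icc_branchWord_subset_ball (hx : x ∈ cantorSet b₁ a L R) {n : ℕ} {r : ℝ}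
    (hr : branchLength b₁ a L R x n < r) :
    Icc (L n (branchWord b₁ a L R x n)) (R n (branchWord b₁ a L R x n)) ⊆ Metric.ball x r := by
  intro z hz
  have hxJ := (branchWord_spec hx n).2
  rw [Metric.mem_ball, Real.dist_eq, abs_sub_lt_iff]
  unfold branchLength at hr
  constructor <;> linarith [hz.1, hz.2, hxJ.1, hxJ.2]

namespace TreeFamily

variable (hT : TreeFamily b₁ c₁ d₁ d₂ a L R)
include hT

theorem two_le_mul_a {n : ℕ} (hn : 1 ≤ n) : 2 ≤ b₁ * a n := by
  have := hT.a_lower n hn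
  rwa [div_le_iff₀ hT.b₁_pos, mul_comm] at this

theorem a_pos {n : ℕ} (hn : 1 ≤ n) : 0 < a n :=
  pos_of_mul_pos_right (two_pos.trans_le (hT.two_le_mul_a hn)) hT.b₁_pos.le

theorem d₂_pos : 0 < d₂ :=
  hT.d₁_pos.trans_le hT.d₁_le_d₂

theorem mul_a_div_two_le_kappa {n : ℕ} (hn : 1 ≤ n) : b₁ * a n / 2 ≤ kappa b₁ a n := by
  have := Nat.sub_one_lt_floor (b₁ * a n)
  have := hT.two_le_mul_a hn
  unfold kappa
  linarith

theorem kappa_pos {n : ℕ} (hn : 1 ≤ n) : 0 < kappa b₁ a n :=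
  Nat.floor_pos.2 (one_le_two.trans (hT.two_le_mul_a hn))

theorem Icc_subset_init {n : ℕ} {ψ : Fin (n + 1) → ℕ} (hψ : ValidWord b₁ a (n + 1) ψ) :
    Icc (L (n + 1) ψ) (R (n + 1) ψ) ⊆ Icc (L n (Fin.init ψ)) (R n (Fin.init ψ)) := by
  have h := hT.nested n _ hψ.init (ψ (Fin.last n)) (hψ _).1 (hψ _).2
  rw [Fin.snoc_init_self] at h
  exact Icc_subset_Icc h.1 h.2

theorem length_bounds_init {n : ℕ} {ψ : Fin (n + 1) → ℕ} (hψ : ValidWord b₁ a (n + 1) ψ) :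
    Real.exp (-d₂ * a (n + 1)) * (R n (Fin.init ψ) - L n (Fin.init ψ)) ≤
        R (n + 1) ψ - L (n + 1) ψ ∧
      R (n + 1) ψ - L (n + 1) ψ ≤
        Real.exp (-d₁ * a (n + 1)) * (R n (Fin.init ψ) - L n (Fin.init ψ)) := by
  have h := hT.ratio n _ hψ.init (ψ (Fin.last n)) (hψ _).1 (hψ _).2
  rwa [Fin.snoc_init_self] at h

theorem right_add_gap_le_left_of_lt {n : ℕ} {θ : Fin n → ℕ} (hθ : ValidWord b₁ a n θ) {i j : ℕ}
    (hi : 1 ≤ i) (hij : i < j) (hj : j ≤ kappa b₁ a (n + 1)) :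
    R (n + 1) (Fin.snoc θ i) + c₁ * (R n θ - L n θ) / a (n + 1) ≤ L (n + 1) (Fin.snoc θ j) := by
  induction j, hij using Nat.le_induction with
  | base => linarith [(hT.gap n θ hθ i hi hj).2]
  | succ j hij ih =>
    have hjR := hT.len_pos (n + 1) (Fin.snoc θ j) (hθ.snoc ⟨by omega, by omega⟩)
    linarith [ih (by omega), (hT.gap n θ hθ j (by omega) hj).1]

theorem two_mul_length_snoc_le_gap {n : ℕ} {θ : Fin n → ℕ} (hθ : ValidWord b₁ a n θ) {i : ℕ}
    (hi : 1 ≤ i ∧ i ≤ kappa b₁ a (n + 1)) :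
    2 * (R (n + 1) (Fin.snoc θ i) - L (n + 1) (Fin.snoc θ i)) ≤
      c₁ * (R n θ - L n θ) / a (n + 1) := by
  have hℓ : 0 ≤ R n θ - L n θ := sub_nonneg.2 (hT.len_pos n θ hθ).le
  have ha := hT.a_pos (n := n + 1) (by omega)
  have hexp : 2 * Real.exp (-d₁ * a (n + 1)) ≤ c₁ / a (n + 1) := by
    rw [le_div_iff₀ ha, neg_mul, Real.exp_neg, mul_right_comm, ← div_eq_mul_inv,
      div_le_iff₀ (Real.exp_pos _)]
    exact hT.a_exp (n + 1) (by omega)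
  calc 2 * (R (n + 1) (Fin.snoc θ i) - L (n + 1) (Fin.snoc θ i))
      ≤ 2 * (Real.exp (-d₁ * a (n + 1)) * (R n θ - L n θ)) := by
        gcongr; exact (hT.ratio n θ hθ i hi.1 hi.2).2
    _ ≤ c₁ / a (n + 1) * (R n θ - L n θ) := by rw [← mul_assoc]; gcongr
    _ = c₁ * (R n θ - L n θ) / a (n + 1) := by ring

theorem two_mul_length_le_dist_of_siblings {n : ℕ} {ψ φ : Fin (n + 1) → ℕ}
    (hψ : ValidWord b₁ a (n + 1) ψ) (hφ : ValidWord b₁ a (n + 1) φ)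
    (hinit : Fin.init ψ = Fin.init φ) (hne : ψ ≠ φ) {y : ℝ}
    (hx : x ∈ Icc (L (n + 1) ψ) (R (n + 1) ψ)) (hy : y ∈ Icc (L (n + 1) φ) (R (n + 1) φ)) :
    2 * (R (n + 1) ψ - L (n + 1) ψ) ≤ |x - y| := by
  obtain ⟨θ, i, rfl⟩ : ∃ θ i, ψ = Fin.snoc θ i := ⟨_, _, (Fin.snoc_init_self ψ).symm⟩
  obtain ⟨θ', j, rfl⟩ : ∃ θ j, φ = Fin.snoc θ j := ⟨_, _, (Fin.snoc_init_self φ).symm⟩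
  simp only [Fin.init_snoc] at hinit
  subst hinit
  have hθ : ValidWord b₁ a n θ := by simpa using hψ.init
  have hi : 1 ≤ i ∧ i ≤ kappa b₁ a (n + 1) := by simpa using hψ (Fin.last n)
  have hj : 1 ≤ j ∧ j ≤ kappa b₁ a (n + 1) := by simpa using hφ (Fin.last n)
  have hgap := hT.two_mul_length_snoc_le_gap hθ hi
  have hg0 := (mul_nonneg zero_le_two (sub_nonneg.2 (hT.len_pos _ _ hψ).le)).trans hgap
  rcases (show i ≠ j from fun h => hne (h ▸ rfl)).lt_or_gt with h | h
  · have := hT.right_add_gap_le_left_of_lt hθ hi.1 h hj.2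
    rw [abs_sub_comm, abs_of_nonneg (by linarith [hx.2, hy.1])]
    linarith [hx.2, hy.1]
  · have := hT.right_add_gap_le_left_of_lt hθ hj.1 h hi.2
    rw [abs_of_nonneg (by linarith [hx.1, hy.2])]
    linarith [hx.1, hy.2]

theorem eq_of_mem_Icc : ∀ {n : ℕ} {θ φ : Fin n → ℕ}, ValidWord b₁ a n θ →
    ValidWord b₁ a n φ → x ∈ Icc (L n θ) (R n θ) → x ∈ Icc (L n φ) (R n φ) → θ = φ
  | 0, _, _, _, _, _, _ => Subsingleton.elim _ _
  | n + 1, θ, φ, hθ, hφ, hxθ, hxφ => by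
    have hinit := eq_of_mem_Icc hθ.init hφ.init (hT.Icc_subset_init hθ hxθ)
      (hT.Icc_subset_init hφ hxφ)
    by_contra hne
    have := hT.two_mul_length_le_dist_of_siblings hθ hφ hinit hne hxθ hxφ
    have := hT.len_pos _ _ hθ
    simp only [sub_self, abs_zero] at *
    linarith

theorem codePoint_mem_Icc (ω : Code b₁ a) (n : ℕ) :
    codePoint b₁ a L ω ∈ Icc (L n (ω.word n)) (R n (ω.word n)) := by
  refine mem_iInter.1 (ciSup_mem_iInter_Icc_of_antitone_Icc (f := fun m => L m (ω.word m))
    (g := fun m => R m (ω.word m)) ?_ fun m => ?_) n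
  · exact antitone_nat_of_succ_le fun m => hT.Icc_subset_init (ω.validWord_word (m + 1))
  · exact (hT.len_pos m _ (ω.validWord_word m)).le

theorem codePoint_mem_cantorSet (ω : Code b₁ a) : codePoint b₁ a L ω ∈ cantorSet b₁ a L R :=
  mem_iInter.2 fun n => mem_biUnion (ω.validWord_word n) (hT.codePoint_mem_Icc ω n)

theorem codePoint_preimage_Icc {n : ℕ} {θ : Fin n → ℕ} (hθ : ValidWord b₁ a n θ) :
    codePoint b₁ a L ⁻¹' Icc (L n θ) (R n θ) = {ω | ω.word n = θ} := by
  ext ω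
  refine ⟨fun h => hT.eq_of_mem_Icc (ω.validWord_word n) hθ (hT.codePoint_mem_Icc ω n) h,
    fun (h : ω.word n = θ) => h ▸ hT.codePoint_mem_Icc ω n⟩

theorem isProbabilityMeasure_cantorMeasure : IsProbabilityMeasure (cantorMeasure b₁ a L) :=
  have := isProbabilityMeasure_uniformCodeMeasure fun n => hT.kappa_pos (Nat.le_add_left 1 n)
  Measure.isProbabilityMeasure_map measurable_codePoint.aemeasurable

theorem cantorMeasure_compl_cantorSet : cantorMeasure b₁ a L (cantorSet b₁ a L R)ᶜ = 0 := by
  have hC : MeasurableSet (cantorSet b₁ a L R) :=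
    .iInter fun n => .iUnion fun θ => .iUnion fun _ => measurableSet_Icc
  rw [cantorMeasure, Measure.map_apply measurable_codePoint hC.compl, preimage_compl,
    preimage_eq_univ_iff.2 (range_subset_iff.2 hT.codePoint_mem_cantorSet), compl_univ,
    measure_empty]

theorem cantorMeasure_Icc {n : ℕ} {θ : Fin n → ℕ} (hθ : ValidWord b₁ a n θ) :
    cantorMeasure b₁ a L (Icc (L n θ) (R n θ)) =
      (∏ i ∈ Finset.Icc 1 n, (kappa b₁ a i : ℝ≥0∞))⁻¹ := by
  have hκ : ∀ i, 0 < kappa b₁ a (i + 1) := fun i => hT.kappa_pos (Nat.le_add_left 1 i)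
  rw [cantorMeasure, Measure.map_apply measurable_codePoint measurableSet_Icc,
    hT.codePoint_preimage_Icc hθ]
  simp_rw [Code.word_eq_iff hθ]
  rw [uniformCodeMeasure_prefix hκ, ← ENNReal.prod_inv_distrib (fun _ _ _ _ _ => by simp),
    ← Finset.Ico_add_one_right_eq_Icc, Finset.prod_Ico_eq_prod_range, Nat.add_sub_cancel]
  simp_rw [add_comm 1]

theorem cantorMeasure_cantorSet_inter_Icc {n : ℕ} {θ : Fin n → ℕ} (hθ : ValidWord b₁ a n θ) :
    cantorMeasure b₁ a L (cantorSet b₁ a L R ∩ Icc (L n θ) (R n θ)) =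
      (∏ i ∈ Finset.Icc 1 n, (kappa b₁ a i : ℝ≥0∞))⁻¹ := by
  rw [inter_comm, measure_inter_conull hT.cantorMeasure_compl_cantorSet, hT.cantorMeasure_Icc hθ]

theorem init_branchWord (hx : x ∈ cantorSet b₁ a L R) (n : ℕ) :
    Fin.init (branchWord b₁ a L R x (n + 1)) = branchWord b₁ a L R x n :=
  have h := branchWord_spec hx (n + 1)
  hT.eq_of_mem_Icc h.1.init (branchWord_spec hx n).1 (hT.Icc_subset_init h.1 h.2)
    (branchWord_spec hx n).2

theorem branchLength_pos (hx : x ∈ cantorSet b₁ a L R) (n : ℕ) :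
    0 < branchLength b₁ a L R x n :=
  sub_pos.2 (hT.len_pos n _ (branchWord_spec hx n).1)

theorem branchLength_succ_bounds (hx : x ∈ cantorSet b₁ a L R) (n : ℕ) :
    Real.exp (-d₂ * a (n + 1)) * branchLength b₁ a L R x n ≤ branchLength b₁ a L R x (n + 1) ∧
      branchLength b₁ a L R x (n + 1) ≤ Real.exp (-d₁ * a (n + 1)) * branchLength b₁ a L R x n := by
  have h := hT.length_bounds_init (branchWord_spec hx (n + 1)).1
  rwa [hT.init_branchWord hx] at h

theorem branchLength_succ_le_mul (hx : x ∈ cantorSet b₁ a L R) (n : ℕ) :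
    branchLength b₁ a L R x (n + 1) ≤ Real.exp (-(d₁ * (2 / b₁))) * branchLength b₁ a L R x n := by
  refine (hT.branchLength_succ_bounds hx n).2.trans ?_
  gcongr
  · exact (hT.branchLength_pos hx n).le
  · rw [neg_mul, neg_le_neg_iff]
    exact mul_le_mul_of_nonneg_left (hT.a_lower (n + 1) (by omega)) hT.d₁_pos.le

theorem antitone_branchLength (hx : x ∈ cantorSet b₁ a L R) :
    Antitone (branchLength b₁ a L R x) := by
  refine antitone_nat_of_succ_le fun n => (hT.branchLength_succ_le_mul hx n).trans ?_
  refine mul_le_of_le_one_left (hT.branchLength_pos hx n).le (Real.exp_le_one_iff.2 ?_)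
  have := hT.b₁_pos
  have := hT.d₁_pos
  rw [neg_nonpos]
  positivity

theorem tendsto_branchLength (hx : x ∈ cantorSet b₁ a L R) :
    Tendsto (branchLength b₁ a L R x) atTop (𝓝 0) := by
  set q := Real.exp (-(d₁ * (2 / b₁)))
  have hq : q < 1 := by
    have := hT.b₁_pos
    have := hT.d₁_pos
    rw [Real.exp_lt_one_iff, neg_neg_iff_pos]
    positivity
  have hle : ∀ n, branchLength b₁ a L R x n ≤ branchLength b₁ a L R x 0 * q ^ n := by
    intro n
    induction n with
    | zero => simp
    | succ n ih =>
      calc branchLength b₁ a L R x (n + 1) ≤ q * branchLength b₁ a L R x n :=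
            hT.branchLength_succ_le_mul hx n
        _ ≤ q * (branchLength b₁ a L R x 0 * q ^ n) := by gcongr
        _ = branchLength b₁ a L R x 0 * q ^ (n + 1) := by ring
  refine squeeze_zero (fun n => (hT.branchLength_pos hx n).le) hle ?_
  simpa using (tendsto_pow_atTop_nhds_zero_of_lt_one (Real.exp_pos _).le hq).const_mul
    (branchLength b₁ a L R x 0)

theorem branchLength_zero_mul_exp_le (hx : x ∈ cantorSet b₁ a L R) (n : ℕ) :
    branchLength b₁ a L R x 0 * Real.exp (-d₂ * ∑ i ∈ Finset.Icc 1 n, a i) ≤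
      branchLength b₁ a L R x n := by
  induction n with
  | zero => simp
  | succ n ih =>
    rw [Finset.sum_Icc_succ_top (by omega), mul_add, Real.exp_add, ← mul_assoc]
    calc branchLength b₁ a L R x 0 * Real.exp (-d₂ * ∑ i ∈ Finset.Icc 1 n, a i) *
          Real.exp (-d₂ * a (n + 1))
        ≤ branchLength b₁ a L R x n * Real.exp (-d₂ * a (n + 1)) := by gcongr
      _ ≤ branchLength b₁ a L R x (n + 1) := by
          rw [mul_comm]; exact (hT.branchLength_succ_bounds hx n).1

theorem mem_Icc_branchWord_or_two_mul_branchLength_le (hx : x ∈ cantorSet b₁ a L R) {y : ℝ}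
    (hy : y ∈ cantorSet b₁ a L R) (n : ℕ) :
    y ∈ Icc (L n (branchWord b₁ a L R x n)) (R n (branchWord b₁ a L R x n)) ∨
      2 * branchLength b₁ a L R x n ≤ |x - y| := by
  induction n with
  | zero =>
    left
    rw [Subsingleton.elim (branchWord b₁ a L R x 0) (branchWord b₁ a L R y 0)]
    exact (branchWord_spec hy 0).2
  | succ n ih =>
    rcases ih with hyn | hfar
    · set ψ := branchWord b₁ a L R x (n + 1)
      set φ := branchWord b₁ a L R y (n + 1)
      have hφ := branchWord_spec hy (n + 1)
      have hinit : Fin.init ψ = Fin.init φ := by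
        rw [hT.init_branchWord hx]
        exact hT.eq_of_mem_Icc (branchWord_spec hx n).1 hφ.1.init hyn
          (hT.Icc_subset_init hφ.1 hφ.2)
      by_cases hψφ : ψ = φ
      · exact .inl (hψφ ▸ hφ.2)
      · exact .inr (hT.two_mul_length_le_dist_of_siblings (branchWord_spec hx (n + 1)).1 hφ.1
          hinit hψφ (branchWord_spec hx (n + 1)).2 hφ.2)
    · exact .inr (le_trans (by gcongr; exact hT.antitone_branchLength hx n.le_succ) hfar)

theorem measure_ball_le_measure_Icc_branchWord {ν : Measure ℝ}
    (hν : ν (cantorSet b₁ a L R)ᶜ = 0) (hx : x ∈ cantorSet b₁ a L R) {n : ℕ} {r : ℝ}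
    (hr : r ≤ 2 * branchLength b₁ a L R x n) :
    ν (Metric.ball x r) ≤
      ν (Icc (L n (branchWord b₁ a L R x n)) (R n (branchWord b₁ a L R x n))) := by
  rw [← measure_inter_conull hν]
  refine measure_mono fun y ⟨hyr, hyC⟩ => ?_
  refine (hT.mem_Icc_branchWord_or_two_mul_branchLength_le hx hyC n).resolve_right fun h => ?_
  rw [Metric.mem_ball, Real.dist_eq, abs_sub_comm] at hyr
  linarith

theorem log_two_div_le_log_a {i : ℕ} (hi : 1 ≤ i) : Real.log (2 / b₁) ≤ Real.log (a i) :=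
  Real.log_le_log (div_pos two_pos hT.b₁_pos) (hT.a_lower i hi)

theorem log_geomMean_eq (n : ℕ) :
    Real.log ((∏ i ∈ Finset.Icc 1 n, a i) ^ ((1 : ℝ) / n)) =
      (∑ i ∈ Finset.Icc 1 n, Real.log (a i)) / n := by
  rw [Real.log_rpow (Finset.prod_pos fun i hi => hT.a_pos (Finset.mem_Icc.1 hi).1),
    Real.log_prod fun i hi => (hT.a_pos (Finset.mem_Icc.1 hi).1).ne', one_div_mul_eq_div]

theorem log_two_div_le_log_geomMean {n : ℕ} (hn : 1 ≤ n) :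
    Real.log (2 / b₁) ≤ Real.log ((∏ i ∈ Finset.Icc 1 n, a i) ^ ((1 : ℝ) / n)) := by
  rw [hT.log_geomMean_eq n, le_div_iff₀ (by exact_mod_cast hn)]
  simpa [mul_comm] using Finset.card_nsmul_le_sum _ _ _ fun i hi =>
    hT.log_two_div_le_log_a (Finset.mem_Icc.1 hi).1

theorem log_geomMean_le_mean {n : ℕ} (hn : 1 ≤ n) :
    Real.log ((∏ i ∈ Finset.Icc 1 n, a i) ^ ((1 : ℝ) / n)) ≤ (∑ i ∈ Finset.Icc 1 n, a i) / n := by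
  rw [hT.log_geomMean_eq n]
  gcongr with i hi
  linarith [Real.log_le_sub_one_of_pos (hT.a_pos (Finset.mem_Icc.1 hi).1)]

/-- `hbdd` bounds the geometric means above, so that `G_* ≥ 2/b₁ > 0` is not a junk value of
`liminf`. -/
theorem eventually_mul_le_sum_log
    (hbdd : IsBoundedUnder (· ≤ ·) atTop fun n : ℕ => (∑ i ∈ Finset.Icc 1 n, a i) / n) :
    ∀ γ < Real.log (liminf (fun n : ℕ => (∏ i ∈ Finset.Icc 1 n, a i) ^ ((1 : ℝ) / n)) atTop),
      ∀ᶠ n in atTop, γ * n ≤ ∑ i ∈ Finset.Icc 1 n, Real.log (a i) := by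
  intro γ hγ
  have hb₁ := div_pos two_pos hT.b₁_pos
  have hpos : ∀ n, 0 < (∏ i ∈ Finset.Icc 1 n, a i) ^ ((1 : ℝ) / n) := fun n =>
    Real.rpow_pos_of_pos (Finset.prod_pos fun i hi => hT.a_pos (Finset.mem_Icc.1 hi).1) _
  have hlow : ∀ᶠ n in atTop, 2 / b₁ ≤ (∏ i ∈ Finset.Icc 1 n, a i) ^ ((1 : ℝ) / n) := by
    filter_upwards [eventually_ge_atTop 1] with n hn
    exact (Real.log_le_log_iff hb₁ (hpos n)).1 (hT.log_two_div_le_log_geomMean hn)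
  have hup : IsBoundedUnder (· ≤ ·) atTop fun n : ℕ =>
      (∏ i ∈ Finset.Icc 1 n, a i) ^ ((1 : ℝ) / n) := by
    obtain ⟨M, hM⟩ := hbdd
    refine ⟨Real.exp M, eventually_map.2 ?_⟩
    filter_upwards [eventually_map.1 hM, eventually_ge_atTop 1] with n hn h1
    rw [← Real.log_le_iff_le_exp (hpos n)]
    exact (hT.log_geomMean_le_mean h1).trans hn
  filter_upwards [eventually_lt_log_of_lt_log_liminf hb₁ hlow hup hγ, eventually_ge_atTop 1]
    with n hn h1
  rw [hT.log_geomMean_eq n, lt_div_iff₀ (by exact_mod_cast h1)] at hn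
  exact hn.le

theorem two_div_le_limsup_mean
    (hbdd : IsBoundedUnder (· ≤ ·) atTop fun n : ℕ => (∑ i ∈ Finset.Icc 1 n, a i) / n) :
    2 / b₁ ≤ limsup (fun n : ℕ => (∑ i ∈ Finset.Icc 1 n, a i) / n) atTop := by
  refine le_limsup_of_frequently_le (Eventually.frequently ?_) hbdd
  filter_upwards [eventually_ge_atTop 1] with n hn
  rw [le_div_iff₀ (by exact_mod_cast hn)]
  simpa [mul_comm] using Finset.card_nsmul_le_sum _ _ _ fun i hi =>
    hT.a_lower i (Finset.mem_Icc.1 hi).1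

theorem log_div_two_add_log_a_le_log_kappa {i : ℕ} (hi : 1 ≤ i) :
    Real.log (b₁ / 2) + Real.log (a i) ≤ Real.log (kappa b₁ a i) := by
  rw [← Real.log_mul (div_pos hT.b₁_pos two_pos).ne' (hT.a_pos hi).ne']
  refine Real.log_le_log (by have := hT.a_pos hi; have := hT.b₁_pos; positivity) ?_
  linarith [hT.mul_a_div_two_le_kappa hi]

theorem neg_log_two_mul_branchLength_le (hx : x ∈ cantorSet b₁ a L R) (n : ℕ) :
    -Real.log (2 * branchLength b₁ a L R x n) ≤
      d₂ * ∑ i ∈ Finset.Icc 1 n, a i + -Real.log (2 * branchLength b₁ a L R x 0) := by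
  have h0 := hT.branchLength_pos hx 0
  have hle := hT.branchLength_zero_mul_exp_le hx n
  have := Real.log_le_log (by positivity) (mul_le_mul_of_nonneg_left hle zero_le_two)
  rw [← mul_assoc, Real.log_mul (by positivity) (Real.exp_pos _).ne', Real.log_exp] at this
  linarith

theorem eventually_mul_le_sum_log_div_two_add_log
    (hbdd : IsBoundedUnder (· ≤ ·) atTop fun n : ℕ => (∑ i ∈ Finset.Icc 1 n, a i) / n) :
    ∀ U < Real.log (b₁ / 2) + Real.log (liminf
      (fun n : ℕ => (∏ i ∈ Finset.Icc 1 n, a i) ^ ((1 : ℝ) / n)) atTop),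
      ∀ᶠ n in atTop, U * n ≤ ∑ i ∈ Finset.Icc 1 n, (Real.log (b₁ / 2) + Real.log (a i)) := by
  intro U hU
  filter_upwards [hT.eventually_mul_le_sum_log hbdd (U - Real.log (b₁ / 2)) (by linarith)]
    with n hn
  rw [Finset.sum_add_distrib, Finset.sum_const, Nat.card_Icc, nsmul_eq_mul, Nat.add_sub_cancel]
  linarith

theorem eventually_neg_log_two_mul_branchLength_succ_le
    (hbdd : IsBoundedUnder (· ≤ ·) atTop fun n : ℕ => (∑ i ∈ Finset.Icc 1 n, a i) / n)
    (hx : x ∈ cantorSet b₁ a L R) :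
    ∀ V > d₂ * limsup (fun n : ℕ => (∑ i ∈ Finset.Icc 1 n, a i) / n) atTop,
      ∀ᶠ n in atTop, -Real.log (2 * branchLength b₁ a L R x (n + 1)) ≤ V * n := by
  intro V hV
  filter_upwards [eventually_mul_shift_add_le_of_linear_growth hT.d₂_pos
    (eventually_le_mul_of_limsup_div_lt hbdd) V hV] with n hn
  exact (hT.neg_log_two_mul_branchLength_le hx (n + 1)).trans hn

theorem le_neg_log_cantorMeasure_ball (hx : x ∈ cantorSet b₁ a L R) {n : ℕ} {r : ℝ}
    (hlt : 2 * branchLength b₁ a L R x (n + 1) < r) (hle : r ≤ 2 * branchLength b₁ a L R x n) :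
    ∑ i ∈ Finset.Icc 1 n, (Real.log (b₁ / 2) + Real.log (a i)) ≤
      -Real.log (cantorMeasure b₁ a L (Metric.ball x r)).toReal := by
  have := hT.isProbabilityMeasure_cantorMeasure
  have hκ : ∀ i ∈ Finset.Icc 1 n, (kappa b₁ a i : ℝ) ≠ 0 := fun i hi =>
    Nat.cast_ne_zero.2 (hT.kappa_pos (Finset.mem_Icc.1 hi).1).ne'
  have hupper : cantorMeasure b₁ a L (Metric.ball x r) ≤
      (∏ i ∈ Finset.Icc 1 n, (kappa b₁ a i : ℝ≥0∞))⁻¹ :=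
    (hT.measure_ball_le_measure_Icc_branchWord hT.cantorMeasure_compl_cantorSet hx hle).trans_eq
      (hT.cantorMeasure_Icc (branchWord_spec hx n).1)
  have hlower : (∏ i ∈ Finset.Icc 1 (n + 1), (kappa b₁ a i : ℝ≥0∞))⁻¹ ≤
      cantorMeasure b₁ a L (Metric.ball x r) := by
    rw [← hT.cantorMeasure_Icc (branchWord_spec hx (n + 1)).1]
    exact measure_mono (Icc_branchWord_subset_ball hx
      (by linarith [hT.branchLength_pos hx (n + 1)]))
  have hpos : 0 < (cantorMeasure b₁ a L (Metric.ball x r)).toReal :=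
    ENNReal.toReal_pos (ne_bot_of_le_ne_bot (ENNReal.inv_ne_zero.2
      (ENNReal.prod_ne_top fun _ _ => ENNReal.natCast_ne_top _)) hlower) (measure_ne_top _ _)
  have hreal : (cantorMeasure b₁ a L (Metric.ball x r)).toReal ≤
      (∏ i ∈ Finset.Icc 1 n, (kappa b₁ a i : ℝ))⁻¹ := by
    refine (ENNReal.toReal_mono ?_ hupper).trans_eq (by simp)
    exact ENNReal.inv_ne_top.2 (Finset.prod_ne_zero_iff.2 fun i hi => by exact_mod_cast hκ i hi)
  calc ∑ i ∈ Finset.Icc 1 n, (Real.log (b₁ / 2) + Real.log (a i))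
      ≤ ∑ i ∈ Finset.Icc 1 n, Real.log (kappa b₁ a i) := Finset.sum_le_sum fun i hi =>
        hT.log_div_two_add_log_a_le_log_kappa (Finset.mem_Icc.1 hi).1
    _ = -Real.log (∏ i ∈ Finset.Icc 1 n, (kappa b₁ a i : ℝ))⁻¹ := by
        rw [Real.log_inv, neg_neg, Real.log_prod hκ]
    _ ≤ -Real.log (cantorMeasure b₁ a L (Metric.ball x r)).toReal :=
        neg_le_neg (Real.log_le_log hpos hreal)

theorem eventually_le_log_cantorMeasure_ball_div_log
    (hbdd : IsBoundedUnder (· ≤ ·) atTop fun n : ℕ => (∑ i ∈ Finset.Icc 1 n, a i) / n)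
    (hx : x ∈ cantorSet b₁ a L R) {d : ℝ}
    (hd : d < (Real.log (b₁ / 2) + Real.log (liminf
        (fun n : ℕ => (∏ i ∈ Finset.Icc 1 n, a i) ^ ((1 : ℝ) / n)) atTop)) /
      (d₂ * limsup (fun n : ℕ => (∑ i ∈ Finset.Icc 1 n, a i) / n) atTop)) :
    ∀ᶠ r in 𝓝[>] (0 : ℝ),
      d ≤ Real.log (cantorMeasure b₁ a L (Metric.ball x r)).toReal / Real.log r := by
  have := hT.isProbabilityMeasure_cantorMeasure
  rcases le_or_gt d 0 with hd0 | hd0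
  · exact (eventually_log_measure_div_log_nonneg _ _).mono fun r hr => hd0.trans hr
  rw [lt_div_iff₀ (mul_pos hT.d₂_pos
    ((div_pos two_pos hT.b₁_pos).trans_le (hT.two_div_le_limsup_mean hbdd)))] at hd
  set ℓ := branchLength b₁ a L R x
  obtain ⟨N, hN⟩ := eventually_atTop.1 (eventually_mul_le_of_linear_growth hd0 hd
    (hT.eventually_mul_le_sum_log_div_two_add_log hbdd)
    (hT.eventually_neg_log_two_mul_branchLength_succ_le hbdd hx))
  have hℓN : 0 < min 1 (2 * ℓ N) := lt_min one_pos (by linarith [hT.branchLength_pos hx N])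
  filter_upwards [Ioo_mem_nhdsGT hℓN] with r ⟨hr0, hr⟩
  obtain ⟨n, hNn, hlt, hle⟩ := ((hT.antitone_branchLength hx).const_mul zero_le_two
    ).exists_apply_succ_lt_le (by simpa using (hT.tendsto_branchLength hx).const_mul 2) hr0
    (hr.le.trans (min_le_right _ _))
  have hlogr : 0 < -Real.log r := neg_pos.2 (Real.log_neg hr0 (hr.trans_le (min_le_left _ _)))
  rw [← neg_div_neg_eq, le_div_iff₀ hlogr]
  calc d * -Real.log r ≤ d * -Real.log (2 * ℓ (n + 1)) :=
        mul_le_mul_of_nonneg_left (neg_le_neg (Real.log_le_log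
          (by linarith [hT.branchLength_pos hx (n + 1)]) hlt.le)) hd0.le
    _ ≤ _ := mul_comm d _ ▸ hN n hNn
    _ ≤ _ := hT.le_neg_log_cantorMeasure_ball hx hlt hle

end TreeFamily

end CantorTree

/-- There is a Borel probability measure `μ` supported on the Cantor set `𝒞`
with `μ(𝒞 ∩ J_θ) = 1/(κ₁⋯κₙ)` for every word `θ` of length `n`, and whose
lower local dimension at every `x ∈ 𝒞` is at least
`(log(b₁/2) + log G_*)/(d₂ · A*)`. -/
theorem cantorSet_exists_measure_local_dimension
    (b₁ c₁ d₁ d₂ : ℝ) (a : ℕ → ℝ) (L R : ∀ n : ℕ, (Fin n → ℕ) → ℝ)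
    (hT : TreeFamily b₁ c₁ d₁ d₂ a L R)
    (hbdd : Filter.IsBoundedUnder (· ≤ ·) Filter.atTop
      (fun n : ℕ => (∑ i ∈ Finset.Icc 1 n, a i) / (n : ℝ))) :
    ∃ μ : MeasureTheory.Measure ℝ, MeasureTheory.IsProbabilityMeasure μ ∧
      μ (cantorSet b₁ a L R)ᶜ = 0 ∧
      (∀ (n : ℕ) (θ : Fin n → ℕ), ValidWord b₁ a n θ →
        μ (cantorSet b₁ a L R ∩ Set.Icc (L n θ) (R n θ)) =
          1 / ∏ i ∈ Finset.Icc 1 n, (kappa b₁ a i : ℝ≥0∞)) ∧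
      ∀ x ∈ cantorSet b₁ a L R,
        (((Real.log (b₁ / 2) +
              Real.log (Filter.liminf
                (fun n : ℕ => (∏ i ∈ Finset.Icc 1 n, a i) ^ ((1 : ℝ) / (n : ℝ)))
                Filter.atTop)) /
            (d₂ * Filter.limsup
              (fun n : ℕ => (∑ i ∈ Finset.Icc 1 n, a i) / (n : ℝ))
              Filter.atTop) : ℝ) : EReal) ≤
          Filter.liminf
            (fun r : ℝ =>
              ((Real.log (μ (Metric.ball x r)).toReal / Real.log r : ℝ) : EReal))
            (nhdsWithin 0 (Set.Ioi 0)) := by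
  refine ⟨cantorMeasure b₁ a L, hT.isProbabilityMeasure_cantorMeasure,
    hT.cantorMeasure_compl_cantorSet, fun n θ hθ => ?_, fun x hx => ?_⟩
  · rw [one_div]
    exact hT.cantorMeasure_cantorSet_inter_Icc hθ
  refine (le_liminf_iff' (by isBoundedDefault) (by isBoundedDefault)).2 fun y hy => ?_
  obtain ⟨d, hyd, hd⟩ := EReal.lt_iff_exists_real_btwn.1 hy
  filter_upwards [hT.eventually_le_log_cantorMeasure_ball_div_log hbdd hx
    (EReal.coe_lt_coe_iff.1 hd)] with r hr
  exact hyd.le.trans (EReal.coe_le_coe_iff.2 hr)
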